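/- Let p be a prime and A a ℤ/pℤ-graded commutative ring with components A_i. The following conditions are equivalent: (1) Σ_{i=1}^{p−1} A_i·A_{p−i} = A_0; (2) A_i^p = A_0 for all i = 1, …, p−1; (3) A_1^p = A_0; (4) A_i·A_{p−i} = A_0 for each i = 1, …, p−1; (5) the multiplication map A_k ⊗_{A_0} A_l → A_{k+l}, a ⊗ b ↦ ab, is bijective for all k, l ∈ ℤ/pℤ. -/

import Mathlib

open scoped TensorProduct

section GradedSetup

variable {A : Type*} [CommRing A] {p : ℕ}
variable (𝒜 : ZMod p → Submodule ℤ A) [GradedRing 𝒜]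

/-- Each component `𝒜 i` is a module over the degree-zero subring `𝒜 0`,
with scalar multiplication induced by the ring multiplication. -/
instance gradeZeroModule (i : ZMod p) : Module (𝒜 (0 : ZMod p)) (𝒜 i) where
  smul r x := ⟨(r : A) * (x : A), by
    have h := SetLike.mul_mem_graded r.2 x.2
    rwa [zero_add] at h⟩
  one_smul x := Subtype.ext (one_mul _)
  mul_smul r s x := Subtype.ext (mul_assoc _ _ _)
  smul_zero r := Subtype.ext (mul_zero _)
  smul_add r x y := Subtype.ext (mul_add _ _ _)
  add_smul r s x := Subtype.ext (add_mul _ _ _)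
  zero_smul x := Subtype.ext (zero_mul _)

/-- The multiplication map `𝒜 k ⊗[𝒜 0] 𝒜 l → 𝒜 (k + l)`, `a ⊗ b ↦ ab`. -/
noncomputable def gradedMulMap (k l : ZMod p) :
    (𝒜 k) ⊗[↥(𝒜 (0 : ZMod p))] (𝒜 l) →ₗ[↥(𝒜 (0 : ZMod p))] (𝒜 (k + l)) :=
  TensorProduct.lift (LinearMap.mk₂ (𝒜 (0 : ZMod p))
    (fun a b => ⟨(a : A) * (b : A), SetLike.mul_mem_graded a.2 b.2⟩)
    (fun _ _ _ => Subtype.ext (add_mul _ _ _))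
    (fun _ _ _ => Subtype.ext (mul_assoc _ _ _))
    (fun _ _ _ => Subtype.ext (mul_add _ _ _))
    (fun _ _ _ => Subtype.ext (mul_left_comm _ _ _)))

end GradedSetup

/-! All five conditions turn out to be equivalent to `1 ∈ 𝒜 1 · 𝒜 (-1)`, and this in turn makes the
grading strong, `𝒜 i · 𝒜 j = 𝒜 (i + j)`: it lets one shift degrees by `1` without loss, and `1`
generates `ℤ/pℤ`. Starting from (1), one uses that `ℤ/pℤ` is a field: the subgroups
`𝒜 i · 𝒜 (-i)` are ideals `Jᵢ` of `𝒜 0` with `Jᵢ Jⱼ ⊆ J_{i+j}`. For `i ≠ 0` there is an `m` with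
`m i = 1`, so `Jᵢ ^ m ⊆ J₁` and every `Jᵢ` lies in the radical of `J₁`. Since
the `Jᵢ` sum to `𝒜 0`, the radical of `J₁` is everything, hence so is `J₁`. -/

section Grading

variable {ι A : Type*}

def IsStronglyGraded [AddMonoid ι] [Ring A] (𝒜 : ι → Submodule ℤ A) : Prop :=
  ∀ i j : ι, 𝒜 i * 𝒜 j = 𝒜 (i + j)

theorem IsStronglyGraded.pow_succ_eq [AddMonoid ι] [Ring A] {𝒜 : ι → Submodule ℤ A}
    (h𝒜 : IsStronglyGraded 𝒜) (i : ι) (n : ℕ) : 𝒜 i ^ (n + 1) = 𝒜 ((n + 1) • i) := by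
  induction n with
  | zero => simp
  | succ n ih => rw [pow_succ, ih, h𝒜, ← succ_nsmul]

section Ring

variable [DecidableEq ι] [AddMonoid ι] [Ring A] (𝒜 : ι → Submodule ℤ A) [GradedRing 𝒜]

theorem grade_mul_le (i j : ι) : 𝒜 i * 𝒜 j ≤ 𝒜 (i + j) :=
  Submodule.mul_le.2 fun _ ha _ hb => SetLike.mul_mem_graded ha hb

theorem grade_pow_le (i : ι) (n : ℕ) : 𝒜 i ^ n ≤ 𝒜 (n • i) := by
  induction n with
  | zero => simpa using Submodule.one_le.2 (SetLike.one_mem_graded 𝒜)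
  | succ n ih =>
    simpa [pow_succ, succ_nsmul] using (mul_le_mul' ih le_rfl).trans (grade_mul_le 𝒜 _ i)

end Ring

section CommRing

variable [DecidableEq ι] [AddCommGroup ι] [CommRing A] (𝒜 : ι → Submodule ℤ A) [GradedRing 𝒜]

theorem grade_mul_neg_le (i : ι) : 𝒜 i * 𝒜 (-i) ≤ 𝒜 0 := by
  simpa using grade_mul_le 𝒜 i (-i)

theorem grade_mul_eq_of_one_mem {i : ι} (h : (1 : A) ∈ 𝒜 i * 𝒜 (-i)) (j : ι) :
    𝒜 j * 𝒜 i = 𝒜 (j + i) := by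
  refine le_antisymm (grade_mul_le 𝒜 j i) ?_
  calc 𝒜 (j + i) = 𝒜 (j + i) * 1 := (mul_one _).symm
    _ ≤ 𝒜 (j + i) * (𝒜 (-i) * 𝒜 i) := by
        rw [mul_comm (𝒜 (-i))]; exact mul_le_mul' le_rfl (Submodule.one_le.2 h)
    _ = 𝒜 (j + i) * 𝒜 (-i) * 𝒜 i := (mul_assoc _ _ _).symm
    _ ≤ 𝒜 j * 𝒜 i := by simpa using mul_le_mul' (grade_mul_le 𝒜 (j + i) (-i)) le_rfl

theorem grade_mul_nsmul_eq_of_one_mem {i : ι} (h : (1 : A) ∈ 𝒜 i * 𝒜 (-i)) (n : ℕ) (j : ι) :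
    𝒜 j * 𝒜 (n • i) = 𝒜 (j + n • i) := by
  induction n generalizing j with
  | zero =>
    have h₀ : (1 : A) ∈ 𝒜 0 * 𝒜 (-0) := by
      simpa using Submodule.mul_mem_mul (SetLike.one_mem_graded 𝒜) (SetLike.one_mem_graded 𝒜)
    simpa using grade_mul_eq_of_one_mem 𝒜 h₀ j
  | succ n ih =>
    rw [succ_nsmul, ← grade_mul_eq_of_one_mem 𝒜 h, ← mul_assoc, ih, grade_mul_eq_of_one_mem 𝒜 h,
      add_assoc]

variable {𝒜} in
theorem IsStronglyGraded.one_mem_mul_neg (h𝒜 : IsStronglyGraded 𝒜) (i : ι) :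
    (1 : A) ∈ 𝒜 i * 𝒜 (-i) := by
  rw [h𝒜, add_neg_cancel]
  exact SetLike.one_mem_graded 𝒜

def gradeMulNegIdeal (i : ι) : Ideal (𝒜 0) where
  carrier := {x | (x : A) ∈ 𝒜 i * 𝒜 (-i)}
  add_mem' {x y} (hx : (x : A) ∈ 𝒜 i * 𝒜 (-i)) (hy : (y : A) ∈ 𝒜 i * 𝒜 (-i)) := add_mem hx hy
  zero_mem' := show (0 : A) ∈ 𝒜 i * 𝒜 (-i) from zero_mem _
  smul_mem' r x (hx : (x : A) ∈ 𝒜 i * 𝒜 (-i)) := by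
    have h : 𝒜 0 * (𝒜 i * 𝒜 (-i)) ≤ 𝒜 i * 𝒜 (-i) := by
      simpa [← mul_assoc] using mul_le_mul' (grade_mul_le 𝒜 0 i) le_rfl
    exact h (Submodule.mul_mem_mul r.2 hx)

theorem mem_gradeMulNegIdeal {i : ι} {x : 𝒜 0} :
    x ∈ gradeMulNegIdeal 𝒜 i ↔ (x : A) ∈ 𝒜 i * 𝒜 (-i) := Iff.rfl

theorem gradeMulNegIdeal_eq_top_iff {i : ι} :
    gradeMulNegIdeal 𝒜 i = ⊤ ↔ (1 : A) ∈ 𝒜 i * 𝒜 (-i) :=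
  Ideal.eq_top_iff_one _

theorem mul_mem_gradeMulNegIdeal {i j : ι} {x y : 𝒜 0} (hx : x ∈ gradeMulNegIdeal 𝒜 i)
    (hy : y ∈ gradeMulNegIdeal 𝒜 j) : x * y ∈ gradeMulNegIdeal 𝒜 (i + j) := by
  have h : (𝒜 i * 𝒜 (-i)) * (𝒜 j * 𝒜 (-j)) ≤ 𝒜 (i + j) * 𝒜 (-(i + j)) := by
    rw [mul_mul_mul_comm, neg_add]
    exact mul_le_mul' (grade_mul_le 𝒜 i j) (grade_mul_le 𝒜 (-i) (-j))
  exact h (Submodule.mul_mem_mul hx hy)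

theorem pow_mem_gradeMulNegIdeal {i : ι} {x : 𝒜 0} (hx : x ∈ gradeMulNegIdeal 𝒜 i) (n : ℕ) :
    x ^ n ∈ gradeMulNegIdeal 𝒜 (n • i) := by
  induction n with
  | zero =>
    simpa [mem_gradeMulNegIdeal] using
      Submodule.mul_mem_mul (SetLike.one_mem_graded 𝒜) (SetLike.one_mem_graded 𝒜)
  | succ n ih => rw [pow_succ, succ_nsmul]; exact mul_mem_gradeMulNegIdeal 𝒜 ih hx

end CommRing

end Grading

theorem ZMod.natCast_sub_eq_neg {n i : ℕ} (h : i ≤ n) : ((n - i : ℕ) : ZMod n) = -i := by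
  simp [Nat.cast_sub h]

theorem IsStronglyGraded.pow_eq_grade_zero {A : Type*} [Ring A] {n : ℕ} [NeZero n]
    {𝒜 : ZMod n → Submodule ℤ A} (h𝒜 : IsStronglyGraded 𝒜) (i : ZMod n) : 𝒜 i ^ n = 𝒜 0 := by
  simpa [Nat.sub_add_cancel NeZero.one_le] using h𝒜.pow_succ_eq i (n - 1)

section ZMod

variable {A : Type*} [CommRing A] {n : ℕ} (𝒜 : ZMod n → Submodule ℤ A) [GradedRing 𝒜]

theorem isStronglyGraded_of_one_mem [NeZero n] (h : (1 : A) ∈ 𝒜 1 * 𝒜 (-1)) :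
    IsStronglyGraded 𝒜 := fun j k => by
  simpa using grade_mul_nsmul_eq_of_one_mem 𝒜 h k.val j

theorem one_mem_mul_neg_one_of_pow_eq [NeZero n] (h : 𝒜 1 ^ n = 𝒜 0) :
    (1 : A) ∈ 𝒜 1 * 𝒜 (-1) := by
  have hle : 𝒜 0 ≤ 𝒜 1 * 𝒜 (-1) :=
    calc 𝒜 0 = 𝒜 1 * 𝒜 1 ^ (n - 1) := by rw [← pow_succ', Nat.sub_add_cancel NeZero.one_le, h]
      _ ≤ 𝒜 1 * 𝒜 ((n - 1) • 1) := mul_le_mul' le_rfl (grade_pow_le 𝒜 1 (n - 1))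
      _ = 𝒜 1 * 𝒜 (-1) := by rw [nsmul_one, ZMod.natCast_sub_eq_neg NeZero.one_le, Nat.cast_one]
  exact hle (SetLike.one_mem_graded 𝒜)

theorem gradeMulNegIdeal_le_radical [Fact n.Prime] {i : ZMod n} (hi : i ≠ 0) :
    gradeMulNegIdeal 𝒜 i ≤ (gradeMulNegIdeal 𝒜 1).radical := fun x hx =>
  ⟨(i⁻¹).val, by
    simpa [nsmul_eq_mul, inv_mul_cancel₀ hi] using pow_mem_gradeMulNegIdeal 𝒜 hx (i⁻¹).val⟩

theorem one_mem_mul_neg_one_of_one_mem_sum [Fact n.Prime] {κ : Type*} {s : Finset κ}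
    {f : κ → ZMod n} (hf : ∀ k ∈ s, f k ≠ 0) (h : (1 : A) ∈ ∑ k ∈ s, 𝒜 (f k) * 𝒜 (-f k)) :
    (1 : A) ∈ 𝒜 1 * 𝒜 (-1) := by
  let N : Submodule ℤ A := ((gradeMulNegIdeal 𝒜 1).radical.toAddSubgroup.map
    (𝒜 0).subtype.toAddMonoidHom).toIntSubmodule
  have hsum : ∑ k ∈ s, 𝒜 (f k) * 𝒜 (-f k) ≤ N :=
    Finset.sum_induction _ (· ≤ N) (fun _ _ => sup_le) bot_le fun k hk x hx =>
      ⟨⟨x, grade_mul_neg_le 𝒜 _ hx⟩, gradeMulNegIdeal_le_radical 𝒜 (hf k hk) hx, rfl⟩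
  obtain ⟨y, hy, hy1⟩ := hsum h
  obtain rfl : y = 1 := Subtype.ext hy1
  rwa [← gradeMulNegIdeal_eq_top_iff, ← Ideal.radical_eq_top, Ideal.eq_top_iff_one]

theorem coe_gradedMulMap_mem_mul {k l : ZMod n} (t : 𝒜 k ⊗[𝒜 0] 𝒜 l) :
    (gradedMulMap 𝒜 k l t : A) ∈ 𝒜 k * 𝒜 l := by
  induction t using TensorProduct.induction_on with
  | zero => simp
  | tmul x y => exact Submodule.mul_mem_mul x.2 y.2
  | add x y hx hy => simpa using add_mem hx hy

theorem exists_coe_gradedMulMap_eq {k l : ZMod n} {x : A} (hx : x ∈ 𝒜 k * 𝒜 l) :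
    ∃ t, (gradedMulMap 𝒜 k l t : A) = x := by
  refine Submodule.mul_induction_on hx (fun a ha b hb => ⟨⟨a, ha⟩ ⊗ₜ ⟨b, hb⟩, rfl⟩) ?_
  rintro _ _ ⟨s, rfl⟩ ⟨t, rfl⟩
  exact ⟨s + t, by simp⟩

theorem gradedMulMap_surjective_iff {k l : ZMod n} :
    Function.Surjective (gradedMulMap 𝒜 k l) ↔ 𝒜 (k + l) ≤ 𝒜 k * 𝒜 l := by
  refine ⟨fun h x hx => ?_, fun h x => ?_⟩
  · obtain ⟨t, ht⟩ := h ⟨x, hx⟩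
    simpa [ht] using coe_gradedMulMap_mem_mul 𝒜 t
  · obtain ⟨t, ht⟩ := exists_coe_gradedMulMap_eq 𝒜 (h x.2)
    exact ⟨t, Subtype.ext ht⟩

def gradeMulLeft {i j m : ZMod n} (h : j + i = m) {b : A} (hb : b ∈ 𝒜 j) :
    𝒜 i →ₗ[𝒜 0] 𝒜 m where
  toFun x := ⟨b * x, h ▸ SetLike.mul_mem_graded hb x.2⟩
  map_add' _ _ := Subtype.ext (mul_add _ _ _)
  map_smul' _ _ := Subtype.ext (mul_left_comm _ _ _)

/-- For `e = ∑ aₜ bₜ` with `aₜ ∈ 𝒜 k`, `bₜ ∈ 𝒜 (-k)`, the witness is `z ↦ ∑ aₜ ⊗ bₜ z`. -/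
theorem exists_comp_gradedMulMap_eq_smul {k : ZMod n} (l : ZMod n) {e : A}
    (he : e ∈ 𝒜 k * 𝒜 (-k)) :
    ∃ g : 𝒜 (k + l) →ₗ[𝒜 0] 𝒜 k ⊗[𝒜 0] 𝒜 l,
      g ∘ₗ gradedMulMap 𝒜 k l = (⟨e, grade_mul_neg_le 𝒜 k he⟩ : 𝒜 0) • LinearMap.id := by
  induction he using Submodule.mul_induction_on' with
  | mem_mul_mem a ha b hb =>
    refine ⟨TensorProduct.mk (𝒜 0) (𝒜 k) (𝒜 l) ⟨a, ha⟩ ∘ₗ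
      gradeMulLeft 𝒜 (neg_add_cancel_left k l) hb, TensorProduct.ext' fun x y => ?_⟩
    have hbx : b * x ∈ 𝒜 0 := neg_add_cancel k ▸ SetLike.mul_mem_graded hb x.2
    have hbxy : gradeMulLeft 𝒜 (neg_add_cancel_left k l) hb (gradedMulMap 𝒜 k l (x ⊗ₜ y)) =
        (⟨b * x, hbx⟩ : 𝒜 0) • y :=
      Subtype.ext (mul_assoc _ _ _).symm
    simp only [LinearMap.comp_apply, LinearMap.smul_apply, LinearMap.id_apply,
      TensorProduct.mk_apply, hbxy, ← TensorProduct.smul_tmul, TensorProduct.smul_tmul']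
    congr 1
    exact Subtype.ext (show b * x * a = a * b * x by ring)
  | add _ _ _ _ hgx hgy =>
    obtain ⟨g, hg⟩ := hgx
    obtain ⟨g', hg'⟩ := hgy
    exact ⟨g + g', by rw [LinearMap.add_comp, hg, hg', ← add_smul]; rfl⟩

theorem gradedMulMap_injective {k : ZMod n} (h : (1 : A) ∈ 𝒜 k * 𝒜 (-k)) (l : ZMod n) :
    Function.Injective (gradedMulMap 𝒜 k l) := by
  obtain ⟨g, hg⟩ := exists_comp_gradedMulMap_eq_smul 𝒜 l h
  exact LinearMap.injective_of_comp_eq_id _ g (hg.trans (one_smul _ _))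

variable {𝒜} in
theorem IsStronglyGraded.gradedMulMap_bijective (h𝒜 : IsStronglyGraded 𝒜) (k l : ZMod n) :
    Function.Bijective (gradedMulMap 𝒜 k l) :=
  ⟨gradedMulMap_injective 𝒜 (h𝒜.one_mem_mul_neg k) l,
    (gradedMulMap_surjective_iff 𝒜).2 (h𝒜 k l).ge⟩

end ZMod

/-- For a `ℤ/pℤ`-graded commutative ring `A` with components `𝒜 i`, the following are
equivalent: (1) `Σ_{i=1}^{p-1} 𝒜 i · 𝒜 (p-i) = 𝒜 0`; (2) `(𝒜 i)^p = 𝒜 0` for all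
`i = 1, …, p-1`; (3) `(𝒜 1)^p = 𝒜 0`; (4) `𝒜 i · 𝒜 (p-i) = 𝒜 0` for each `i = 1, …, p-1`;
(5) the multiplication map `𝒜 k ⊗[𝒜 0] 𝒜 l → 𝒜 (k+l)` is bijective for all `k, l`. -/
theorem graded_torsor_tfae
    {A : Type*} [CommRing A] {p : ℕ} (hp : p.Prime)
    (𝒜 : ZMod p → Submodule ℤ A) [GradedRing 𝒜] :
    List.TFAE
      [∑ i ∈ Finset.Icc 1 (p - 1), 𝒜 (i : ZMod p) * 𝒜 ((p - i : ℕ) : ZMod p)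
          = 𝒜 (0 : ZMod p),
        ∀ i ∈ Finset.Icc 1 (p - 1), 𝒜 (i : ZMod p) ^ p = 𝒜 (0 : ZMod p),
        𝒜 (1 : ZMod p) ^ p = 𝒜 (0 : ZMod p),
        ∀ i ∈ Finset.Icc 1 (p - 1),
          𝒜 (i : ZMod p) * 𝒜 ((p - i : ℕ) : ZMod p) = 𝒜 (0 : ZMod p),
        ∀ k l : ZMod p, Function.Bijective (gradedMulMap 𝒜 k l)] := by
  have : Fact p.Prime := ⟨hp⟩
  have hS := isStronglyGraded_of_one_mem 𝒜
  have h1 : 1 ∈ Finset.Icc 1 (p - 1) := Finset.mem_Icc.2 ⟨le_rfl, by have := hp.two_le; omega⟩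
  have hne : ∀ i ∈ Finset.Icc 1 (p - 1), (i : ZMod p) ≠ 0 := fun i hi => by
    rw [Ne, ZMod.natCast_eq_zero_iff]
    exact Nat.not_dvd_of_pos_of_lt (by grind) (by grind)
  have hneg : ∀ i ∈ Finset.Icc 1 (p - 1), ((p - i : ℕ) : ZMod p) = -i := fun i hi =>
    ZMod.natCast_sub_eq_neg (by grind)
  have hsum : ∑ i ∈ Finset.Icc 1 (p - 1), 𝒜 (i : ZMod p) * 𝒜 ((p - i : ℕ) : ZMod p) =
      ∑ i ∈ Finset.Icc 1 (p - 1), 𝒜 (i : ZMod p) * 𝒜 (-i) :=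
    Finset.sum_congr rfl fun i hi => by rw [hneg i hi]
  have h4 (h : IsStronglyGraded 𝒜) : ∀ i ∈ Finset.Icc 1 (p - 1),
      𝒜 (i : ZMod p) * 𝒜 ((p - i : ℕ) : ZMod p) = 𝒜 0 := fun i hi => by
    rw [hneg i hi, h, add_neg_cancel]
  tfae_have 1 → 2 := fun h _ _ => (hS (one_mem_mul_neg_one_of_one_mem_sum 𝒜 hne
    (hsum ▸ h ▸ SetLike.one_mem_graded 𝒜))).pow_eq_grade_zero _
  tfae_have 2 → 3 := fun h => by simpa using h 1 h1
  tfae_have 3 → 4 := fun h => h4 (hS (one_mem_mul_neg_one_of_pow_eq 𝒜 h))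
  tfae_have 4 → 5 := fun h => (hS (by
    simpa [hneg 1 h1] using (h 1 h1).ge (SetLike.one_mem_graded 𝒜))).gradedMulMap_bijective
  tfae_have 5 → 1 := fun h => by
    have h𝒜 := hS ((gradedMulMap_surjective_iff 𝒜).1 (h 1 (-1)).2
      (by simpa using SetLike.one_mem_graded 𝒜))
    rw [Finset.sum_congr rfl (h4 h𝒜), Finset.sum_const,
      nsmul_eq_self (Finset.card_ne_zero_of_mem h1)]
  tfae_finish
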